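/- arXiv:1604.02948 — 2 statements merged into one kernel-verified Lean document; each statement's English description precedes it below -/
import Mathlib

section
/- Let n ≥ 3, v = (v', vₙ) with vₙ > 0, M the identity with last column (v', vₙ)ᵀ, Q = M⁻¹, and σ = Q Qᵀ / det Q. Then σ is symmetric positive definite, and σ equals the block matrix vₙ·[ I_{(n−1)} + (1/vₙ²) v' v'ᵀ , −(1/vₙ²) v' ; −(1/vₙ²) v'ᵀ , 1/vₙ² ]. -/
open Matrix

private lemma stmt9_helper {n : ℕ} (i0 : Fin n) (a b : ℝ) (f : Fin n → ℝ) (i : Fin n) :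
    ∑ k, (if k = i0 then a else if i = k then b else 0) * f k
      = a * f i0 + if i = i0 then 0 else b * f i := by
  rw [← Finset.add_sum_erase _ _ (Finset.mem_univ i0)]
  congr 1
  · simp
  by_cases hi : i = i0
  · rw [if_pos hi]
    apply Finset.sum_eq_zero
    intro k hk
    simp only [Finset.mem_erase] at hk
    simp [hk.1, hi, (Ne.symm hk.1 : ¬ i0 = k)]
  · rw [if_neg hi, Finset.sum_eq_single_of_mem i (by simp [hi])]
    · simp [hi]
    · intro k hk hki
      simp only [Finset.mem_erase] at hk
      simp [hk.1, Ne.symm hki]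

/-- With `M` the identity with last column `v = (v', vₙ)`, `vₙ > 0`, `Q = M⁻¹` and
`σ = Q Qᵀ / det Q`, the matrix `σ` is symmetric positive definite and equals the
explicit block matrix `vₙ [I + v'v'ᵀ/vₙ², −v'/vₙ²; −v'ᵀ/vₙ², 1/vₙ²]`. -/
theorem stmt9 (n : ℕ) (hn : 3 ≤ n) (i0 : Fin n) (hi0 : (i0 : ℕ) = n - 1)
    (v : Fin n → ℝ) (hv : 0 < v i0)
    (M Q σ : Matrix (Fin n) (Fin n) ℝ)
    (hM : ∀ i j, M i j = if j = i0 then v i else if i = j then 1 else 0)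
    (hQ : Q = M⁻¹) (hσ : σ = (Q.det)⁻¹ • (Q * Qᵀ)) :
    σ.PosDef ∧
    (∀ i j, i ≠ i0 → j ≠ i0 →
      σ i j = v i0 * ((if i = j then (1 : ℝ) else 0) + v i * v j / (v i0) ^ 2)) ∧
    (∀ i, i ≠ i0 → σ i i0 = v i0 * (-(v i) / (v i0) ^ 2)
        ∧ σ i0 i = v i0 * (-(v i) / (v i0) ^ 2)) ∧
    σ i0 i0 = v i0 * (1 / (v i0) ^ 2) := by
  have hv0 : v i0 ≠ 0 := ne_of_gt hv
  set w : Fin n → ℝ := fun i => if i = i0 then (v i0)⁻¹ else -(v i) * (v i0)⁻¹ with hw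
  set N : Matrix (Fin n) (Fin n) ℝ :=
    Matrix.of (fun i j => if j = i0 then w i else if i = j then (1 : ℝ) else 0) with hN
  have hNapp : ∀ i j, N i j = if j = i0 then w i else if i = j then 1 else 0 := fun i j => rfl
  -- M * N = 1
  have hMN : M * N = 1 := by
    ext i j
    rw [mul_apply]
    simp only [hM, hNapp]
    by_cases hj : j = i0
    · rw [hj]
      rw [show (∑ k, (if k = i0 then v i else if i = k then 1 else 0) *
            (if (i0 : Fin n) = i0 then w k else if k = i0 then 1 else 0))
          = ∑ k, (if k = i0 then v i else if i = k then 1 else 0) * w k by simp]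
      rw [stmt9_helper i0 (v i) 1 w i]
      by_cases hi : i = i0
      · simp [hi, hw, one_apply, hv0]
      · simp only [hw, if_neg hi, if_pos rfl, one_apply, hi, one_mul]
        rw [if_neg (by simpa using hi)]
        field_simp
        simp
    · rw [show (∑ k, (if k = i0 then v i else if i = k then 1 else 0) *
            (if j = i0 then w k else if k = j then 1 else 0))
          = ∑ k, (if k = i0 then v i else if i = k then 1 else 0) *
            (if k = j then (1:ℝ) else 0) by simp [hj]]
      rw [stmt9_helper i0 (v i) 1 (fun k => if k = j then (1:ℝ) else 0) i]
      by_cases hi : i = i0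
      · simp [hi, Ne.symm hj, one_apply, hj]
      · simp [hi, Ne.symm hj, one_apply]
  have hQN : Q = N := by rw [hQ, inv_eq_right_inv hMN]
  -- determinant
  have hdetM : M.det = v i0 := by
    have : M = (1 : Matrix (Fin n) (Fin n) ℝ).updateCol i0 v := by
      ext i j; rw [hM]; simp [updateCol_apply, one_apply]
    rw [this, ← cramer_apply, cramer_one]; rfl
  have hdetQ : Q.det = (v i0)⁻¹ := by
    rw [hQ, det_nonsing_inv, Ring.inverse_eq_inv, hdetM]
  -- entries of σ
  have hσapp : ∀ i j, σ i j = v i0 * ∑ k, N i k * N j k := by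
    intro i j
    rw [hσ, hdetQ, inv_inv, Matrix.smul_apply, smul_eq_mul, hQN, mul_apply]
    simp [transpose_apply]
  have hsum : ∀ i j, (∑ k, N i k * N j k)
      = w i * w j + if i = i0 then 0 else if i = j then 1 else 0 := by
    intro i j
    have := stmt9_helper i0 (w i) 1 (fun k => N j k) i
    simp only [hNapp] at this ⊢
    rw [this]
    by_cases hi : i = i0
    · simp [hi]
    · simp [hi, eq_comm]
  refine ⟨?_, ?_, ?_, ?_⟩
  · -- PosDef
    refine posDef_iff_dotProduct_mulVec.mpr ⟨?_, ?_⟩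
    · -- Hermitian
      show σᴴ = σ
      rw [hσ]
      have h1 : (Q * Qᵀ)ᴴ = Q * Qᵀ := isHermitian_mul_conjTranspose_self Q
      rw [conjTranspose_smul, h1, star_trivial]
    · intro x hx
      have hNM : N * M = 1 := mul_eq_one_comm.mp hMN
      set y : Fin n → ℝ := Qᵀ *ᵥ x with hy
      have hyx : star x ⬝ᵥ σ *ᵥ x = v i0 * (y ⬝ᵥ y) := by
        rw [hσ, hdetQ, inv_inv, smul_mulVec, dotProduct_smul, smul_eq_mul,
          star_trivial, ← mulVec_mulVec, dotProduct_mulVec, ← mulVec_transpose]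
      have hy0 : y ≠ 0 := by
        intro h0
        apply hx
        have : Mᵀ *ᵥ y = x := by
          rw [hy, hQN, mulVec_mulVec, ← transpose_mul, hNM, transpose_one, one_mulVec]
        rw [← this, h0, mulVec_zero]
      have hyy : 0 < y ⬝ᵥ y := by
        rcases lt_or_eq_of_le (Finset.sum_nonneg fun i _ => mul_self_nonneg (y i)) with h | h
        · exact h
        · exact absurd (dotProduct_self_eq_zero.mp h.symm) hy0
      rw [hyx]
      positivity
  · intro i j hi hj
    rw [hσapp, hsum]
    simp only [hw, if_neg hi, if_neg hj]
    by_cases hij : i = j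
    · simp only [if_pos hij]
      rw [div_eq_mul_inv, sq, mul_inv]; ring
    · simp only [if_neg hij]
      rw [div_eq_mul_inv, sq, mul_inv]; ring
  · intro i hi
    constructor
    · rw [hσapp, hsum]
      simp only [hw, if_neg hi, if_pos rfl, if_pos rfl]
      rw [div_eq_mul_inv, sq, mul_inv]; ring
    · rw [hσapp, hsum]
      simp only [hw, if_neg hi, if_pos rfl]
      rw [if_neg (Ne.symm hi)]
      simp only [reduceIte, if_pos rfl]
      rw [div_eq_mul_inv, sq, mul_inv]; ring
  · rw [hσapp, hsum]
    simp only [hw, if_pos rfl, reduceIte]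
    rw [div_eq_mul_inv, sq, mul_inv]; ring
end

section
/- There exist distinct symmetric positive definite n×n matrices σ₁ ≠ σ₂ (n ≥ 3) such that the associated metrics gₖ = (det σₖ)^{1/(n−2)} σₖ⁻¹ satisfy g₁(x'−y')·(x'−y') = g₂(x'−y')·(x'−y') for all x', y' in the hyperplane {xₙ = 0}. For instance σ₁ = I and σ₂ the push-forward of I under the map M with last column (v', vₙ)ᵀ for any v' ≠ 0, vₙ = 1. -/
open Matrix

lemma stmt10_aux_transpose_transvection {n : ℕ} (e0 i0 : Fin n) :
    (Matrix.transvection e0 i0 (1:ℝ))ᵀ = 1 + Matrix.single i0 e0 (1:ℝ) := by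
  ext i j
  simp [Matrix.transvection, Matrix.transpose_apply, Matrix.add_apply,
    Matrix.single, Matrix.one_apply, and_comm, eq_comm]

/-- Nonuniqueness: there exist distinct symmetric positive definite matrices
`σ₁ ≠ σ₂` whose associated metrics `g = (det σ)^(1/(n-2)) σ⁻¹` induce the same
quadratic form on differences of points of the hyperplane `{xₙ = 0}`. -/
theorem stmt10 (n : ℕ) (hn : 3 ≤ n) (i0 : Fin n) (hi0 : (i0 : ℕ) = n - 1) :
    ∃ σ₁ σ₂ : Matrix (Fin n) (Fin n) ℝ, σ₁.PosDef ∧ σ₂.PosDef ∧ σ₁ ≠ σ₂ ∧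
      ∀ x y : Fin n → ℝ, x i0 = 0 → y i0 = 0 →
        (x - y) ⬝ᵥ ((σ₁.det ^ ((1 : ℝ) / ((n : ℝ) - 2))) • σ₁⁻¹).mulVec (x - y)
          = (x - y) ⬝ᵥ ((σ₂.det ^ ((1 : ℝ) / ((n : ℝ) - 2))) • σ₂⁻¹).mulVec (x - y) := by
  have hn0 : 0 < n := by omega
  set e0 : Fin n := ⟨0, hn0⟩ with he0
  have hne : e0 ≠ i0 := by
    intro h
    apply_fun (Fin.val) at h
    simp only [he0] at h
    omega
  set S : Matrix (Fin n) (Fin n) ℝ := Matrix.single e0 i0 (1:ℝ) with hS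
  set B : Matrix (Fin n) (Fin n) ℝ := Matrix.transvection e0 i0 (1:ℝ) with hB
  have hBS : B = 1 + S := rfl
  have hdetB : B.det = 1 := Matrix.det_transvection_of_ne _ _ hne 1
  have hA : (Bᵀ * B).det = 1 := by
    rw [Matrix.det_mul, Matrix.det_transpose, hdetB]; ring
  have hAunit : IsUnit (Bᵀ * B).det := by rw [hA]; exact isUnit_one
  have hBunit : IsUnit B := by
    rw [Matrix.isUnit_iff_isUnit_det, hdetB]; exact isUnit_one
  have hct : Bᴴ = Bᵀ := by
    ext i j; simp [Matrix.conjTranspose_apply]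
  have hposA : (Bᵀ * B).PosDef := by
    rw [Matrix.posDef_iff_dotProduct_mulVec]
    constructor
    · rw [← hct]; exact Matrix.isHermitian_conjTranspose_mul_self B
    · intro x hx
      have hBx : B *ᵥ x ≠ 0 :=
        (Matrix.mulVec_injective_iff_isUnit.mpr hBunit |>.ne_iff' (by simp)).2 hx
      have key : star x ⬝ᵥ (Bᵀ * B) *ᵥ x = star (B *ᵥ x) ⬝ᵥ (B *ᵥ x) := by
        rw [star_trivial, star_trivial, ← Matrix.mulVec_mulVec,
          Matrix.dotProduct_mulVec, Matrix.vecMul_transpose]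
      rw [key]
      exact Matrix.dotProduct_star_self_pos_iff.mpr hBx
  refine ⟨1, (Bᵀ * B)⁻¹, Matrix.PosDef.one, hposA.inv, ?_, ?_⟩
  · -- distinctness
    intro h
    have hinv : ((Bᵀ * B)⁻¹)⁻¹ = Bᵀ * B := Matrix.nonsing_inv_nonsing_inv _ hAunit
    have h1 : (1 : Matrix (Fin n) (Fin n) ℝ) = Bᵀ * B := by
      calc (1 : Matrix (Fin n) (Fin n) ℝ) = (1 : Matrix (Fin n) (Fin n) ℝ)⁻¹ := by simp
        _ = ((Bᵀ * B)⁻¹)⁻¹ := by rw [← h]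
        _ = Bᵀ * B := hinv
    have h2 : (Bᵀ * B) i0 i0 = 2 := by
      have hBt : Bᵀ = 1 + Matrix.single i0 e0 (1:ℝ) :=
        stmt10_aux_transpose_transvection e0 i0
      rw [hBt, hBS, hS]
      simp only [Matrix.add_mul, Matrix.mul_add, Matrix.one_mul, Matrix.mul_one,
        Matrix.single_mul_single_same, one_mul]
      simp [Matrix.add_apply, Matrix.one_apply, Matrix.single_apply_of_ne, hne,
        Ne.symm hne]
      norm_num
    rw [← h1] at h2
    simp [Matrix.one_apply] at h2
  · -- quadratic form equality
    intro x y hx hy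
    have hdetinv : ((Bᵀ * B)⁻¹).det = 1 := by
      rw [Matrix.det_nonsing_inv, hA]; simp
    have hinv : ((Bᵀ * B)⁻¹)⁻¹ = Bᵀ * B := Matrix.nonsing_inv_nonsing_inv _ hAunit
    have h11 : (1 : Matrix (Fin n) (Fin n) ℝ)⁻¹ = 1 := by simp
    rw [Matrix.det_one, hdetinv, Real.one_rpow, one_smul, one_smul, h11, hinv]
    set v : Fin n → ℝ := x - y with hv
    have hvi0 : v i0 = 0 := by simp [hv, hx, hy]
    have hBv : B *ᵥ v = v := by
      rw [hBS, Matrix.add_mulVec, Matrix.one_mulVec, hS, Matrix.single_mulVec,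
        hvi0]
      simp
    have : v ⬝ᵥ (Bᵀ * B) *ᵥ v = (B *ᵥ v) ⬝ᵥ (B *ᵥ v) := by
      rw [← Matrix.mulVec_mulVec, Matrix.dotProduct_mulVec, Matrix.vecMul_transpose]
    rw [this, hBv, Matrix.one_mulVec]
end
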